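/- arXiv:2001.09863 — 4 statements merged into one kernel-verified Lean document; each statement's English description precedes it below -/
import Mathlib

section
/- Sample-path inductive comparison (MAF step): Let Δ_P, Δ_π ∈ ℝ^m be vectors arranged in non-increasing order (Δ_P[1] ≥ … ≥ Δ_P[m], similarly for Δ_π) with Δ_P[i] ≤ Δ_π[i] for all i. Suppose a delivery at time t of a packet generated at time S updates the P-system by removing the maximum component Δ_P[1] and inserting the value t−S, and updates the π-system by removing some arbitrary component and inserting t−S. Then, after re-sorting both resulting vectors in non-increasing order, the new vectors Δ'_P and Δ'_π satisfy Δ'_P[i] ≤ Δ'_π[i] for all i. -/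
/-!
In a non-increasingly sorted list, the entry at index `i` is `≤ x` exactly when at most `i`
entries exceed `x`. So, for vectors of equal length, componentwise domination of the sorted
vectors is domination of the counting functions `x ↦ #{y | x < y}`. Removing the maximum lowers
every nonzero count by exactly one, removing an arbitrary entry lowers a count by at most one,
and inserting the same value `v` into both sides raises both counts equally.
-/

/-- The `i`-th largest element of a multiset of reals (0-indexed), via sorting
in non-increasing order. -/
noncomputable def nthLargest (s : Multiset ℝ) (i : ℕ) : ℝ := (s.sort (· ≥ ·)).getD i 0

namespace List

variable {α : Type*} [LinearOrder α] {l : List α}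

theorem SortedGE.countP_lt_le_iff_getElem_le (hl : l.SortedGE) {i : ℕ} (hi : i < l.length)
    (x : α) : l.countP (x < ·) ≤ i ↔ l[i] ≤ x := by
  constructor
  · intro hcount
    by_contra! hx
    have htake : ∀ a ∈ l.take (i + 1), x < a := by
      intro a ha
      obtain ⟨j, hj, rfl⟩ := mem_take_iff_getElem.1 ha
      exact hx.trans_le (hl.getElem_ge_getElem_of_le (by omega))
    have := (take_sublist (i + 1) l).countP_le (p := (x < ·))
    rw [countP_eq_length.2 (by simpa using htake), length_take] at this
    omega
  · intro hx
    have hdrop : ∀ a ∈ l.drop i, ¬ x < a := by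
      intro a ha
      obtain ⟨j, hj, rfl⟩ := mem_iff_getElem.1 ha
      rw [getElem_drop, not_lt]
      exact (hl.getElem_ge_getElem_of_le (by omega)).trans hx
    rw [← take_append_drop i l, countP_append,
      (countP_eq_zero (l := l.drop i)).2 (by simpa using hdrop)]
    exact countP_le_length.trans (by simp)

end List

theorem nthLargest_le_iff {S : Multiset ℝ} {i : ℕ} (hi : i < S.card) (x : ℝ) :
    nthLargest S i ≤ x ↔ S.countP (x < ·) ≤ i := by
  have hlen : i < (S.sort (· ≥ ·)).length := by rwa [Multiset.length_sort]
  rw [nthLargest, List.getD_eq_getElem _ _ hlen,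
    ← ((S.pairwise_sort _).sortedGE).countP_lt_le_iff_getElem_le hlen, ← Multiset.coe_countP,
    Multiset.sort_eq]

theorem forall_nthLargest_le_iff_forall_countP_le {S T : Multiset ℝ} (h : S.card = T.card) :
    (∀ i < S.card, nthLargest S i ≤ nthLargest T i) ↔
      ∀ x, S.countP (x < ·) ≤ T.countP (x < ·) := by
  constructor
  · intro hle x
    by_cases hx : T.countP (x < ·) < S.card
    · exact (nthLargest_le_iff hx x).1 <|
        (hle _ hx).trans ((nthLargest_le_iff (h ▸ hx) x).2 le_rfl)
    · exact (S.countP_le_card _).trans (not_lt.1 hx)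
  · intro hcount i hi
    exact (nthLargest_le_iff hi _).2 <|
      (hcount _).trans ((nthLargest_le_iff (h ▸ hi) _).1 le_rfl)

namespace Multiset

variable {α : Type*} [DecidableEq α]

theorem countP_sub_one_le_countP_erase (p : α → Prop) [DecidablePred p] (s : Multiset α)
    (a : α) :
    s.countP p - 1 ≤ (s.erase a).countP p := by
  by_cases ha : a ∈ s
  · conv_lhs => rw [← cons_erase ha, countP_cons]
    split_ifs <;> omega
  · rw [erase_of_notMem ha]
    omega

theorem countP_erase_of_forall_le [LinearOrder α] {s : Multiset α} {a : α} (ha : a ∈ s)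
    (hmax : ∀ y ∈ s, y ≤ a) (x : α) :
    (s.erase a).countP (x < ·) = s.countP (x < ·) - 1 := by
  conv_rhs => rw [← cons_erase ha, countP_cons]
  split_ifs with hxa
  · omega
  · have : (s.erase a).countP (x < ·) = 0 := countP_eq_zero.2 fun y hy =>
      not_lt.2 ((hmax y (mem_of_mem_erase hy)).trans (not_lt.1 hxa))
    omega

end Multiset

theorem maf_inductive_comparison_general
    (m : ℕ) (P Q : Multiset ℝ)
    (hPcard : Multiset.card P = m) (hQcard : Multiset.card Q = m)
    (hle : ∀ i, i < m → nthLargest P i ≤ nthLargest Q i)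
    (v : ℝ)
    (p : ℝ) (hpP : p ∈ P) (hpmax : ∀ x ∈ P, x ≤ p)
    (q : ℝ) (hqQ : q ∈ Q) :
    ∀ i, i < m → nthLargest (v ::ₘ P.erase p) i ≤ nthLargest (v ::ₘ Q.erase q) i := by
  have card_replace {S : Multiset ℝ} {a : ℝ} (ha : a ∈ S) :
      (v ::ₘ S.erase a).card = S.card := by
    rw [Multiset.card_cons, Multiset.card_erase_add_one ha]
  have hcount := (forall_nthLargest_le_iff_forall_countP_le (hPcard.trans hQcard.symm)).1
    (hPcard ▸ hle)
  rw [← hPcard, ← card_replace hpP, forall_nthLargest_le_iff_forall_countP_le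
    (by rw [card_replace hpP, card_replace hqQ, hPcard, hQcard])]
  intro x
  have herase : (P.erase p).countP (x < ·) ≤ (Q.erase q).countP (x < ·) :=
    calc (P.erase p).countP (x < ·) = P.countP (x < ·) - 1 :=
          Multiset.countP_erase_of_forall_le hpP hpmax x
      _ ≤ Q.countP (x < ·) - 1 := Nat.sub_le_sub_right (hcount x) 1
      _ ≤ (Q.erase q).countP (x < ·) := Multiset.countP_sub_one_le_countP_erase _ Q q
  rw [Multiset.countP_cons, Multiset.countP_cons]
  exact Nat.add_le_add_right herase _

/-- Inductive comparison step for the MAF scheduler: if the sorted age vector of system `P`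
is componentwise below that of system `π`, `P` replaces its maximum component by the new
age `v = t − S ≥ 0` while `π` replaces an arbitrary component by `v`, then after re-sorting
the componentwise domination is preserved. -/
theorem maf_inductive_comparison
    (m : ℕ) (hm : 1 ≤ m) (P Q : Multiset ℝ)
    (hPcard : Multiset.card P = m) (hQcard : Multiset.card Q = m)
    (hle : ∀ i, i < m → nthLargest P i ≤ nthLargest Q i)
    (v : ℝ) (hv : 0 ≤ v)
    (p : ℝ) (hpP : p ∈ P) (hpmax : ∀ x ∈ P, x ≤ p)
    (q : ℝ) (hqQ : q ∈ Q) :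
    ∀ i, i < m → nthLargest (v ::ₘ P.erase p) i ≤ nthLargest (v ::ₘ Q.erase q) i :=
  maf_inductive_comparison_general m P Q hPcard hQcard hle v p hpP hpmax q hqQ
end

section
/- Zero-wait Ta-AP value for linear age: For the MAF scheduler with zero-wait sampling and i.i.d. service times Y_i distributed as Y (0 < E[Y] < ∞, E[Y²] < ∞), the long-run total-average age of m sources equals Δ̄₀ = ( (m(m+1)/2)·E[Y]² + (m/2)·E[Y²] ) / E[Y]. -/
/-! The area swept by the total age during one service interval is `∑ₗ (Δₗ Y + Y² / 2)`. Once
`i ≥ m`, the age of the `l`-th source just after the `i`-th delivery is the sum of the last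
`m - l` service times, all independent of the next one `Y (i + 1)`, so the expected area of
every interval from the `m`-th on is `(m (m + 1) / 2) E[Y]² + (m / 2) E[Y²]`. The expected
total area over `n` intervals therefore grows like `n` times this constant, the expected
elapsed time is `n E[Y]`, and a Cesàro argument gives the limit. -/

open MeasureTheory ProbabilityTheory Filter intervalIntegral

/-- Age vector evolution under the MAF scheduler with zero-wait sampling:
`ageVec a0 Y i` is the (non-increasingly sorted) vector of source ages just after the
`i`-th delivery, where `Y k` is the service time of packet `k`.  After each delivery the
minimum age is reset to the last service time and all other ages shift and grow. -/
def ageVec {m : ℕ} (a0 : Fin m → ℝ) (Y : ℕ → ℝ) : ℕ → Fin m → ℝ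
  | 0 => a0
  | (i + 1) => fun l =>
      if h : (l : ℕ) + 1 < m then ageVec a0 Y i ⟨(l : ℕ) + 1, h⟩ + Y (i + 1)
      else Y (i + 1)

open Finset

-- While `i + l < m` the source still carries its initial age, and the truncated subtraction makes
-- the window `Ioc 0 i`, i.e. every service so far.
theorem ageVec_eq {m : ℕ} (a0 : Fin m → ℝ) (Y : ℕ → ℝ) (i : ℕ) (l : Fin m) :
    ageVec a0 Y i l =
      (if h : i + l < m then a0 ⟨i + l, h⟩ else 0) + ∑ j ∈ Ioc (i + l - m) i, Y j := by
  induction i generalizing l with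
  | zero => simp [ageVec, l.isLt]
  | succ i ih =>
    by_cases h : (l : ℕ) + 1 < m
    · simp only [ageVec, h, dif_pos, ih]
      rw [show i + 1 + (l : ℕ) - m = i + ((l : ℕ) + 1) - m by omega,
        sum_Ioc_succ_top (by omega), add_assoc]
      simp only [show i + 1 + (l : ℕ) = i + ((l : ℕ) + 1) by omega]
    · simp only [ageVec, h, dite_false, dif_neg (show ¬ i + 1 + (l : ℕ) < m by omega), zero_add,
        show i + 1 + (l : ℕ) - m = i by omega, Nat.Ioc_succ_singleton, sum_singleton]

theorem integral_id_add (a y : ℝ) : ∫ τ in a..a + y, τ = a * y + y ^ 2 / 2 := by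
  rw [integral_id]
  ring

theorem sum_range_natCast_sub (m : ℕ) : ∑ l ∈ range m, ((m : ℝ) - l) = m * (m + 1) / 2 := by
  induction m with
  | zero => simp
  | succ k ih =>
    rw [sum_range_succ]
    simp only [Nat.cast_succ, add_sub_right_comm _ (1 : ℝ), sum_add_distrib, ih, sum_const,
      card_range, nsmul_eq_mul]
    ring

theorem tendsto_sum_range_div_of_eventually_eq {c : ℕ → ℝ} {C : ℝ} (hc : ∀ᶠ i in atTop, c i = C)
    (μ : ℝ) : Tendsto (fun n : ℕ => (∑ i ∈ range n, c i) / (n * μ)) atTop (nhds (C / μ)) := by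
  have hcesaro := ((tendsto_const_nhds.congr' (hc.mono fun _ h => h.symm)).cesaro).div_const μ
  exact hcesaro.congr fun n => by ring

noncomputable def ageArea {Ω : Type*} {m : ℕ} (a0 : Fin m → ℝ) (Y : ℕ → Ω → ℝ) (i : ℕ) (ω : Ω) :
    ℝ :=
  ∑ l, ∫ τ in (ageVec a0 (Y · ω) i l)..(ageVec a0 (Y · ω) i l + Y (i + 1) ω), τ

theorem ageArea_eq {Ω : Type*} {m : ℕ} {Y : ℕ → Ω → ℝ} (a0 : Fin m → ℝ) (i : ℕ) (ω : Ω) :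
    ageArea a0 Y i ω = ∑ l, (ageVec a0 (Y · ω) i l * Y (i + 1) ω + Y (i + 1) ω ^ 2 / 2) := by
  simp only [ageArea, integral_id_add]

section Moments

variable {Ω : Type*} [MeasureSpace Ω] {Y : ℕ → Ω → ℝ}
  (hindep : iIndepFun Y ℙ) (hident : ∀ i, IdentDistrib (Y i) (Y 0) ℙ ℙ)
  (hY0 : Integrable (Y 0))

include hident hY0 in
theorem integrable_of_identDistrib (i : ℕ) : Integrable (Y i) :=
  (hident i).integrable_iff.2 hY0

include hindep hident hY0 in
theorem integrable_mul_of_ne {j k : ℕ} (hjk : j ≠ k) : Integrable (fun ω => Y j ω * Y k ω) :=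
  (hindep.indepFun hjk).integrable_mul (integrable_of_identDistrib hident hY0 j)
    (integrable_of_identDistrib hident hY0 k)

include hindep hident hY0 in
theorem integral_mul_of_ne {j k : ℕ} (hjk : j ≠ k) :
    ∫ ω, Y j ω * Y k ω = (∫ ω, Y 0 ω) ^ 2 := by
  rw [← Pi.mul_def, (hindep.indepFun hjk).integral_mul_eq_mul_integral
    (integrable_of_identDistrib hident hY0 j).aestronglyMeasurable
    (integrable_of_identDistrib hident hY0 k).aestronglyMeasurable,
    (hident j).integral_eq, (hident k).integral_eq, sq]

include hident in
theorem identDistrib_sq (k : ℕ) : IdentDistrib (fun ω => Y k ω ^ 2) (fun ω => Y 0 ω ^ 2) ℙ ℙ :=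
  (hident k).comp (measurable_id.pow_const 2)

include hindep hident hY0 in
theorem integrable_ageVec_mul_next {m : ℕ} (a0 : Fin m → ℝ) (i : ℕ) (l : Fin m) :
    Integrable (fun ω => ageVec a0 (Y · ω) i l * Y (i + 1) ω) := by
  simp_rw [ageVec_eq, add_mul, sum_mul]
  refine ((integrable_of_identDistrib hident hY0 _).const_mul _).add
    (integrable_finsetSum _ fun j hj => integrable_mul_of_ne hindep hident hY0 ?_)
  have := (mem_Ioc.1 hj).2
  omega

include hindep hident hY0 in
theorem integral_ageVec_mul_next {m : ℕ} (a0 : Fin m → ℝ) {i : ℕ} (hi : m ≤ i) (l : Fin m) :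
    ∫ ω, ageVec a0 (Y · ω) i l * Y (i + 1) ω = (m - l) * (∫ ω, Y 0 ω) ^ 2 := by
  have hne : ∀ j ∈ Ioc (i + l - m) i, j ≠ i + 1 := fun j hj => by
    have := (mem_Ioc.1 hj).2
    omega
  simp_rw [ageVec_eq, dif_neg (show ¬ i + l < m by omega), zero_add, sum_mul]
  rw [integral_finsetSum _ fun j hj => integrable_mul_of_ne hindep hident hY0 (hne j hj),
    sum_congr rfl fun j hj => integral_mul_of_ne hindep hident hY0 (hne j hj), sum_const,
    Nat.card_Ioc, show i - (i + l - m) = m - l by omega, nsmul_eq_mul,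
    Nat.cast_sub l.isLt.le]

variable (hY0sq : Integrable (fun ω => Y 0 ω ^ 2))

include hindep hident hY0 hY0sq in
theorem integrable_ageArea_summand {m : ℕ} (a0 : Fin m → ℝ) (i : ℕ) (l : Fin m) :
    Integrable (fun ω => ageVec a0 (Y · ω) i l * Y (i + 1) ω + Y (i + 1) ω ^ 2 / 2) :=
  (integrable_ageVec_mul_next hindep hident hY0 a0 i l).add
    (((identDistrib_sq hident _).integrable_iff.2 hY0sq).div_const 2)

include hindep hident hY0 hY0sq in
theorem integrable_ageArea {m : ℕ} (a0 : Fin m → ℝ) (i : ℕ) : Integrable (ageArea a0 Y i) := by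
  simp_rw [funext (ageArea_eq a0 i)]
  exact integrable_finsetSum _ fun l _ => integrable_ageArea_summand hindep hident hY0 hY0sq a0 i l

include hindep hident hY0 hY0sq in
theorem integral_ageArea {m : ℕ} (a0 : Fin m → ℝ) {i : ℕ} (hi : m ≤ i) :
    ∫ ω, ageArea a0 Y i ω =
      (m * (m + 1) / 2) * (∫ ω, Y 0 ω) ^ 2 + (m / 2) * ∫ ω, Y 0 ω ^ 2 := by
  simp_rw [ageArea_eq]
  rw [integral_finsetSum _ fun l _ => integrable_ageArea_summand hindep hident hY0 hY0sq a0 i l]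
  simp_rw [integral_add (integrable_ageVec_mul_next hindep hident hY0 a0 i _)
    (((identDistrib_sq hident _).integrable_iff.2 hY0sq).div_const 2),
    integral_ageVec_mul_next hindep hident hY0 a0 hi, MeasureTheory.integral_div,
    (identDistrib_sq hident _).integral_eq, sum_add_distrib, ← sum_mul,
    Fin.sum_univ_eq_sum_range (fun l => (m : ℝ) - l), sum_range_natCast_sub, sum_const,
    card_univ, Fintype.card_fin, nsmul_eq_mul]
  ring

end Moments

theorem zero_wait_maf_total_average_age_general
    {Ω : Type*} [MeasureSpace Ω] [IsProbabilityMeasure (ℙ : Measure Ω)]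
    (m : ℕ)
    (Y : ℕ → Ω → ℝ)
    (hindep : iIndepFun (m := fun _ => Real.measurableSpace) Y ℙ)
    (hident : ∀ i, IdentDistrib (Y i) (Y 0) ℙ ℙ)
    (hnonneg : ∀ i ω, 0 ≤ Y i ω) (b : ℝ) (hbdd : ∀ i ω, Y i ω ≤ b)
    (hEY : 0 < ∫ ω, Y 0 ω)
    (a0 : Fin m → ℝ) :
    Tendsto
      (fun n : ℕ =>
        (∫ ω, ∑ i ∈ Finset.range n,
            ∑ l, ∫ τ in (ageVec a0 (Y · ω) i l)..(ageVec a0 (Y · ω) i l + Y (i + 1) ω), τ) /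
          (∫ ω, ∑ i ∈ Finset.range n, Y (i + 1) ω))
      atTop
      (nhds ((((m : ℝ) * (m + 1) / 2) * (∫ ω, Y 0 ω) ^ 2 +
          ((m : ℝ) / 2) * ∫ ω, (Y 0 ω) ^ 2) / (∫ ω, Y 0 ω))) := by
  -- a non-integrable function has Bochner integral `0`
  have hY0 : Integrable (Y 0) := Integrable.of_integral_ne_zero hEY.ne'
  have hY0sq : Integrable (fun ω => Y 0 ω ^ 2) :=
    Integrable.of_bound (hY0.aestronglyMeasurable.pow 2) (b ^ 2) (ae_of_all _ fun ω => by
      rw [Real.norm_of_nonneg (sq_nonneg _)]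
      exact pow_le_pow_left₀ (hnonneg 0 ω) (hbdd 0 ω) 2)
  have harea (n : ℕ) :
      ∫ ω, ∑ i ∈ range n, ageArea a0 Y i ω = ∑ i ∈ range n, ∫ ω, ageArea a0 Y i ω :=
    integral_finsetSum _ fun i _ => integrable_ageArea hindep hident hY0 hY0sq a0 i
  have htime (n : ℕ) : ∫ ω, ∑ i ∈ range n, Y (i + 1) ω = n * ∫ ω, Y 0 ω := by
    rw [integral_finsetSum _ fun i _ => integrable_of_identDistrib hident hY0 (i + 1)]
    simp [(hident _).integral_eq]
  refine (tendsto_sum_range_div_of_eventually_eq ((eventually_ge_atTop m).mono fun i hi =>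
    integral_ageArea hindep hident hY0 hY0sq a0 hi) _).congr fun n => ?_
  rw [← harea, ← htime]
  rfl

/-- Zero-wait Ta-AP value for linear age: for the MAF scheduler with zero-wait sampling and
i.i.d., bounded, non-negative service times `Y_i` with `E[Y] > 0`, the long-run total-average
age of `m` sources, namely the limit of
`E[∑_l ∫_0^{D_n} Δ_l(t) dt] / E[D_n]` with `D_n = ∑_{i=1}^n Y_i`, equals
`((m(m+1)/2) E[Y]² + (m/2) E[Y²]) / E[Y]`. -/
theorem zero_wait_maf_total_average_age
    {Ω : Type*} [MeasureSpace Ω] [IsProbabilityMeasure (ℙ : Measure Ω)]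
    (m : ℕ) (hm : 1 ≤ m)
    (Y : ℕ → Ω → ℝ) (hmeas : ∀ i, Measurable (Y i))
    (hindep : iIndepFun (m := fun _ => Real.measurableSpace) Y ℙ)
    (hident : ∀ i, IdentDistrib (Y i) (Y 0) ℙ ℙ)
    (hnonneg : ∀ i ω, 0 ≤ Y i ω) (b : ℝ) (hbdd : ∀ i ω, Y i ω ≤ b)
    (hEY : 0 < ∫ ω, Y 0 ω)
    (a0 : Fin m → ℝ) (ha0 : ∀ l, 0 ≤ a0 l) :
    Tendsto
      (fun n : ℕ =>
        (∫ ω, ∑ i ∈ Finset.range n,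
            ∑ l, ∫ τ in (ageVec a0 (Y · ω) i l)..(ageVec a0 (Y · ω) i l + Y (i + 1) ω), τ) /
          (∫ ω, ∑ i ∈ Finset.range n, Y (i + 1) ω))
      atTop
      (nhds ((((m : ℝ) * (m + 1) / 2) * (∫ ω, Y 0 ω) ^ 2 +
          ((m : ℝ) / 2) * ∫ ω, (Y 0 ω) ^ 2) / (∫ ω, Y 0 ω))) :=
  zero_wait_maf_total_average_age_general m Y hindep hident hnonneg b hbdd hEY a0
end

section
/- Sufficient condition for zero-wait optimality (linear age): Let Y be a random variable with values in a finite set Y ⊂ [0,∞), E[Y] > 0, and y_inf = min of the support of Y. If y_inf ≥ ((m−1)E[Y]² + E[Y²]) / ((m+1)E[Y]), then every reachable state s = (a_1,…,a_m) of the zero-wait MAF system satisfies ∑_l a_l ≥ Δ̄₀ − m E[Y], where Δ̄₀ = ((m(m+1)/2)E[Y]² + (m/2)E[Y²])/E[Y]. -/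
/-- One transition of the sorted age state:
`a'_{[m]} = y` and `a'_{[l]} = a_{[l+1]} + z + y` for `l < m`, with waiting time `z ≥ 0`
and service time `y` drawn from `supp`. -/
def AgeStep (m : ℕ) (supp : Set ℝ) (a b : Fin m → ℝ) : Prop :=
  ∃ z : ℝ, 0 ≤ z ∧ ∃ y ∈ supp,
    ∀ l : Fin m, b l = if h : (l : ℕ) + 1 < m then a ⟨(l : ℕ) + 1, h⟩ + z + y else y

/-- `n`-step reachability under `AgeStep`. -/
def AgeReach (m : ℕ) (supp : Set ℝ) : ℕ → (Fin m → ℝ) → (Fin m → ℝ) → Prop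
  | 0, a, b => a = b
  | (n + 1), a, b => ∃ c, AgeStep m supp a c ∧ AgeReach m supp n c b

/-!
After `m` transitions every entry of the sorted age state is a sum of fresh service times:
the `l`-th entry (0-indexed) collects at least `m - l` of them, each at least `y_inf`, so the
total age is at least `m(m+1)/2 · y_inf`. The hypothesis on `y_inf`, multiplied by `m/2`, is
exactly the statement that this floor dominates `Δ̄₀ − m E[Y]`.
-/

section AgeFloor

variable {m : ℕ} {supp : Set ℝ} {c : ℝ}

theorem AgeStep.le_apply (hc : ∀ y ∈ supp, c ≤ y) {a b : Fin m → ℝ} (hab : AgeStep m supp a b)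
    (l : Fin m) : (if h : (l : ℕ) + 1 < m then a ⟨(l : ℕ) + 1, h⟩ else 0) + c ≤ b l := by
  obtain ⟨z, hz, y, hy, hb⟩ := hab
  have hcy := hc y hy
  rw [hb l]
  split_ifs <;> linarith

theorem AgeReach.le_apply (hc : ∀ y ∈ supp, c ≤ y) :
    ∀ (n : ℕ) {a b : Fin m → ℝ}, AgeReach m supp n a b → ∀ l : Fin m,
      if h : (l : ℕ) + n < m then a ⟨(l : ℕ) + n, h⟩ + n * c ≤ b l
      else ((m : ℝ) - l) * c ≤ b l
  | 0, a, b, hab, l => by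
    cases hab
    simp [l.isLt]
  | n + 1, a, b, ⟨d, had, hdb⟩, l => by
    have hd := AgeReach.le_apply hc n hdb l
    by_cases hln : (l : ℕ) + n < m
    · rw [dif_pos hln] at hd
      have hstep := had.le_apply hc ⟨(l : ℕ) + n, hln⟩
      by_cases hlast : (l : ℕ) + n + 1 < m
      · rw [dif_pos hlast] at hstep
        rw [dif_pos (by omega)]
        change a ⟨(l : ℕ) + (n + 1), _⟩ + c ≤ _ at hstep
        push_cast
        linarith
      · rw [dif_neg hlast] at hstep
        rw [dif_neg (by omega)]
        have hml : (m : ℝ) - l = n + 1 := by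
          rw [sub_eq_iff_eq_add]; exact_mod_cast (by omega : m = n + 1 + l)
        rw [hml]
        linarith
    · rw [dif_neg hln] at hd
      rwa [dif_neg (by omega)]

theorem AgeReach.sub_val_mul_le_apply (hc : ∀ y ∈ supp, c ≤ y) {n : ℕ} (hn : m ≤ n)
    {a b : Fin m → ℝ} (hab : AgeReach m supp n a b) (l : Fin m) :
    ((m : ℝ) - l) * c ≤ b l := by
  simpa [show ¬((l : ℕ) + n < m) by omega] using hab.le_apply hc n l

end AgeFloor

theorem Fin.sum_natCast_sub_val (m : ℕ) :
    ∑ l : Fin m, ((m : ℝ) - l) = m * (m + 1) / 2 := by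
  induction m with
  | zero => simp
  | succ m ih =>
    rw [Fin.sum_univ_succ]
    simp only [Fin.val_zero, Fin.val_succ, Nat.cast_add, Nat.cast_one, CharP.cast_eq_zero,
      add_sub_add_right_eq_sub, ih]
    ring

theorem div_sub_le_of_threshold {k E E₂ c : ℝ} (hk : 0 ≤ k) (hE : 0 < E)
    (hcond : (k - 1) * E ^ 2 + E₂ ≤ (k + 1) * E * c) :
    (k * (k + 1) / 2 * E ^ 2 + k / 2 * E₂) / E - k * E ≤ k * (k + 1) / 2 * c := by
  rw [sub_le_iff_le_add, div_le_iff₀ hE]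
  nlinarith [mul_le_mul_of_nonneg_left hcond (by positivity : (0 : ℝ) ≤ k / 2)]

theorem zero_wait_optimality_sufficient_condition_general
    (m : ℕ)
    (Yset : Finset ℝ) (hYne : Yset.Nonempty)
    (w : ℝ → ℝ)
    (hEY : 0 < ∑ y ∈ Yset, w y * y)
    (hcond : ((m : ℝ) - 1) * (∑ y ∈ Yset, w y * y) ^ 2 + (∑ y ∈ Yset, w y * y ^ 2) ≤
      ((m : ℝ) + 1) * (∑ y ∈ Yset, w y * y) * Yset.min' hYne)
    (a b : Fin m → ℝ) (n : ℕ) (hn : m ≤ n)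
    (hreach : AgeReach m (↑Yset : Set ℝ) n a b) :
    ((((m : ℝ) * (m + 1) / 2) * (∑ y ∈ Yset, w y * y) ^ 2 +
          ((m : ℝ) / 2) * ∑ y ∈ Yset, w y * y ^ 2) / (∑ y ∈ Yset, w y * y)) -
        (m : ℝ) * (∑ y ∈ Yset, w y * y) ≤ ∑ l, b l := by
  have hmin : ∀ y ∈ (↑Yset : Set ℝ), Yset.min' hYne ≤ y := fun y hy => Yset.min'_le y hy
  calc _ ≤ (m : ℝ) * (m + 1) / 2 * Yset.min' hYne :=
        div_sub_le_of_threshold m.cast_nonneg hEY hcond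
    _ = ∑ l : Fin m, ((m : ℝ) - l) * Yset.min' hYne := by
      rw [← Finset.sum_mul, Fin.sum_natCast_sub_val]
    _ ≤ ∑ l, b l := Finset.sum_le_sum fun l _ => hreach.sub_val_mul_le_apply hmin hn l

/-- Sufficient condition for zero-wait optimality (linear age): if the smallest possible
service time satisfies `y_inf ≥ ((m−1)E[Y]² + E[Y²]) / ((m+1)E[Y])`, then every reachable
state `s = (a_1,…,a_m)` of the zero-wait MAF system satisfies
`∑_l a_l ≥ Δ̄₀ − m E[Y]`, where `Δ̄₀ = ((m(m+1)/2)E[Y]² + (m/2)E[Y²]) / E[Y]`. -/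
theorem zero_wait_optimality_sufficient_condition
    (m : ℕ) (hm : 1 ≤ m)
    (Yset : Finset ℝ) (hYne : Yset.Nonempty) (hYpos : ∀ y ∈ Yset, 0 ≤ y)
    (w : ℝ → ℝ) (hw : ∀ y ∈ Yset, 0 ≤ w y) (hw1 : ∑ y ∈ Yset, w y = 1)
    (hEY : 0 < ∑ y ∈ Yset, w y * y)
    (hcond : ((m : ℝ) - 1) * (∑ y ∈ Yset, w y * y) ^ 2 + (∑ y ∈ Yset, w y * y ^ 2) ≤
      ((m : ℝ) + 1) * (∑ y ∈ Yset, w y * y) * Yset.min' hYne)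
    (a b : Fin m → ℝ) (n : ℕ) (hn : m ≤ n)
    (hreach : AgeReach m (↑Yset : Set ℝ) n a b) :
    ((((m : ℝ) * (m + 1) / 2) * (∑ y ∈ Yset, w y * y) ^ 2 +
          ((m : ℝ) / 2) * ∑ y ∈ Yset, w y * y ^ 2) / (∑ y ∈ Yset, w y * y)) -
        (m : ℝ) * (∑ y ∈ Yset, w y * y) ≤ ∑ l, b l :=
  zero_wait_optimality_sufficient_condition_general m Yset hYne w hEY hcond a b n hn hreach
end

section
/- State reachability bound: Under the state evolution a'_{[m]} = y, a'_{[l]} = a_{[l+1]} + z + y for l = 1,…,m−1 with y ≥ y_inf > 0 and z ≥ 0, after at least m transitions from any initial state, the sorted state satisfies a_{[l]} ≥ (m−l+1)·y_inf for every l = 1,…,m. -/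
/-! Each transition shifts the state one slot towards the front and adds `z + y ≥ y_inf` to
every entry, while the new last entry is `y ≥ y_inf`. Hence after `k` transitions the last `k`
entries dominate the staircase `(m - l) · y_inf`; after `m` transitions this covers every entry. -/

def StaircaseBoundOnTail (m : ℕ) (yinf : ℝ) (k : ℕ) (b : Fin m → ℝ) : Prop :=
  ∀ l : Fin m, m - (l : ℕ) ≤ k → ((m - (l : ℕ) : ℕ) : ℝ) * yinf ≤ b l

namespace StaircaseBoundOnTail

variable {m : ℕ} {yinf : ℝ} {supp : Set ℝ} {k : ℕ} {a b : Fin m → ℝ}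

theorem zero : StaircaseBoundOnTail m yinf 0 a := fun l hl => by omega

theorem ageStep (hsupp : supp ⊆ Set.Ici yinf) (ha : StaircaseBoundOnTail m yinf k a)
    (hstep : AgeStep m supp a b) : StaircaseBoundOnTail m yinf (k + 1) b := by
  obtain ⟨z, hz, y, hy, hb⟩ := hstep
  have hyinf_le : yinf ≤ y := hsupp hy
  intro l hl
  rw [hb l]
  split_ifs with h
  · have hprev := ha ⟨(l : ℕ) + 1, h⟩ (by simp only; omega)
    have hsucc : m - (l : ℕ) = (m - ((l : ℕ) + 1)) + 1 := by omega
    rw [hsucc, Nat.cast_succ, add_one_mul]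
    linarith
  · have hlast : m - (l : ℕ) = 1 := by omega
    simpa [hlast] using hyinf_le

theorem ageReach (hsupp : supp ⊆ Set.Ici yinf) {n : ℕ} (ha : StaircaseBoundOnTail m yinf k a)
    (hreach : AgeReach m supp n a b) : StaircaseBoundOnTail m yinf (k + n) b := by
  induction n generalizing k a with
  | zero => exact hreach ▸ ha
  | succ n ih =>
    obtain ⟨c, hstep, hrest⟩ := hreach
    rw [← add_comm 1 n, ← add_assoc]
    exact ih (ha.ageStep hsupp hstep) hrest

end StaircaseBoundOnTail

theorem age_state_reachability_bound_general
    (m : ℕ) (yinf : ℝ)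
    (a b : Fin m → ℝ) (n : ℕ) (hn : m ≤ n)
    (hreach : AgeReach m (Set.Ici yinf) n a b) :
    ∀ l : Fin m, ((m - (l : ℕ) : ℕ) : ℝ) * yinf ≤ b l := by
  have hb : StaircaseBoundOnTail m yinf (0 + n) b :=
    StaircaseBoundOnTail.zero.ageReach subset_rfl hreach
  exact fun l => hb l (by omega)

/-- State reachability bound: with service times `y ≥ y_inf > 0` and waits `z ≥ 0`, after at
least `m` transitions from any initial state, the sorted state satisfies
`a_{[l]} ≥ (m − l + 1) · y_inf` for every `l` (here the index `l : Fin m` is 0-based, so the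
`l`-th largest entry is bounded below by `(m − l) · y_inf`). -/
theorem age_state_reachability_bound
    (m : ℕ) (hm : 1 ≤ m) (yinf : ℝ) (hyinf : 0 < yinf)
    (a b : Fin m → ℝ) (n : ℕ) (hn : m ≤ n)
    (hreach : AgeReach m (Set.Ici yinf) n a b) :
    ∀ l : Fin m, ((m - (l : ℕ) : ℕ) : ℝ) * yinf ≤ b l :=
  age_state_reachability_bound_general m yinf a b n hn hreach
end
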